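/- arXiv:2403.01732 — 3 statements merged into one kernel-verified Lean document; each statement's English description precedes it below -/
import Mathlib

section
/- Let f be C² with f(α₋) = f(α) = f(α₊) = 0 for α₋ < α < α₊, f > 0 on (α₋, α), f < 0 on (α, α₊), f'(α₋) < 0 and f'(α₊) < 0. Let a be C¹ with a ≥ c > 0 on [α₋, α₊]. Define W(u) = −2∫_{α₋}^u a(s)f(s)ds and assume W(α₊) = 0. Then there exists a constant C_W > 0 such that C_W⁻¹ (s − α₋)² (α₊ − s)² ≤ W(s) ≤ C_W (s − α₋)² (α₊ − s)² for all s ∈ [α₋, α₊]. -/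
open MeasureTheory intervalIntegral Set

lemma int_sub_left (p q : ℝ) : ∫ t in p..q, (t - p) = (q - p)^2/2 := by
  rw [intervalIntegral.integral_comp_sub_right (fun x => x) p, integral_id]
  simp [sub_self]

lemma int_sub_right (p q : ℝ) : ∫ t in p..q, (q - t) = (q - p)^2/2 := by
  rw [intervalIntegral.integral_comp_sub_left (fun x => x) q, integral_id]
  simp [sub_self]

lemma fun_bound_left (f : ℝ → ℝ) (hf : Continuous (deriv f))
    (hdiff : ∀ x, DifferentiableAt ℝ f x)
    (p q m M : ℝ) (hp : f p = 0)
    (hm : ∀ t ∈ Icc p q, m ≤ deriv f t) (hM : ∀ t ∈ Icc p q, deriv f t ≤ M) :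
    ∀ t ∈ Icc p q, m * (t - p) ≤ f t ∧ f t ≤ M * (t - p) := by
  intro t ht
  have hpt : p ≤ t := ht.1
  have hsub : Icc p t ⊆ Icc p q := Icc_subset_Icc le_rfl ht.2
  have heq : ∫ x in p..t, deriv f x = f t - f p :=
    integral_deriv_eq_sub (fun x _ => hdiff x) (hf.intervalIntegrable p t)
  have hint : IntervalIntegrable (deriv f) volume p t := hf.intervalIntegrable p t
  constructor
  · have := intervalIntegral.integral_mono_on hpt (intervalIntegrable_const) hint
      (fun x hx => hm x (hsub hx))
    rw [heq, intervalIntegral.integral_const] at this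
    rw [hp, sub_zero] at this
    calc m * (t - p) = (t - p) • m := by rw [smul_eq_mul]; ring
    _ ≤ f t := this
  · have := intervalIntegral.integral_mono_on hpt hint (intervalIntegrable_const)
      (fun x hx => hM x (hsub hx))
    rw [heq, intervalIntegral.integral_const, hp, sub_zero] at this
    calc f t ≤ (t - p) • M := this
    _ = M * (t - p) := by rw [smul_eq_mul]; ring

lemma fun_bound_right (f : ℝ → ℝ) (hf : Continuous (deriv f))
    (hdiff : ∀ x, DifferentiableAt ℝ f x)
    (p q m M : ℝ) (hq : f q = 0)
    (hm : ∀ t ∈ Icc p q, m ≤ deriv f t) (hM : ∀ t ∈ Icc p q, deriv f t ≤ M) :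
    ∀ t ∈ Icc p q, -M * (q - t) ≤ f t ∧ f t ≤ -m * (q - t) := by
  intro t ht
  have htq : t ≤ q := ht.2
  have hsub : Icc t q ⊆ Icc p q := Icc_subset_Icc ht.1 le_rfl
  have heq : ∫ x in t..q, deriv f x = f q - f t :=
    integral_deriv_eq_sub (fun x _ => hdiff x) (hf.intervalIntegrable t q)
  have hint : IntervalIntegrable (deriv f) volume t q := hf.intervalIntegrable t q
  constructor
  · have := intervalIntegral.integral_mono_on htq hint (intervalIntegrable_const)
      (fun x hx => hM x (hsub hx))
    rw [heq, intervalIntegral.integral_const, hq, zero_sub] at this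
    have : -((q - t) • M) ≤ f t := by linarith [this]
    calc -M * (q - t) = -((q - t) • M) := by rw [smul_eq_mul]; ring
    _ ≤ f t := this
  · have := intervalIntegral.integral_mono_on htq (intervalIntegrable_const) hint
      (fun x hx => hm x (hsub hx))
    rw [heq, intervalIntegral.integral_const, hq, zero_sub] at this
    have h2 : f t ≤ -((q - t) • m) := by linarith [this]
    calc f t ≤ -((q - t) • m) := h2
    _ = -m * (q - t) := by rw [smul_eq_mul]; ring



lemma int_bound_left (g : ℝ → ℝ) (hg : Continuous g) (p q m M : ℝ) (hpq : p ≤ q)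
    (hm : ∀ t ∈ Icc p q, m * (t - p) ≤ g t) (hM : ∀ t ∈ Icc p q, g t ≤ M * (t - p)) :
    m * (q - p)^2/2 ≤ (∫ t in p..q, g t) ∧ (∫ t in p..q, g t) ≤ M * (q - p)^2/2 := by
  have hc : Continuous fun t : ℝ => t - p := by continuity
  have h1 : (∫ t in p..q, m * (t - p)) = m * ((q - p)^2/2) := by
    rw [intervalIntegral.integral_const_mul, int_sub_left]
  have h2 : (∫ t in p..q, M * (t - p)) = M * ((q - p)^2/2) := by
    rw [intervalIntegral.integral_const_mul, int_sub_left]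
  constructor
  · have := intervalIntegral.integral_mono_on hpq
      ((continuous_const.mul hc).intervalIntegrable p q) (hg.intervalIntegrable (μ := volume) p q) hm
    simp only [Pi.mul_apply] at this; rw [h1] at this; linarith
  · have := intervalIntegral.integral_mono_on hpq (hg.intervalIntegrable (μ := volume) p q)
      ((continuous_const.mul hc).intervalIntegrable p q) hM
    simp only [Pi.mul_apply] at this; rw [h2] at this; linarith

lemma int_bound_right (g : ℝ → ℝ) (hg : Continuous g) (p q m M : ℝ) (hpq : p ≤ q)
    (hm : ∀ t ∈ Icc p q, m * (q - t) ≤ g t) (hM : ∀ t ∈ Icc p q, g t ≤ M * (q - t)) :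
    m * (q - p)^2/2 ≤ (∫ t in p..q, g t) ∧ (∫ t in p..q, g t) ≤ M * (q - p)^2/2 := by
  have hc : Continuous fun t : ℝ => q - t := by continuity
  have h1 : (∫ t in p..q, m * (q - t)) = m * ((q - p)^2/2) := by
    rw [intervalIntegral.integral_const_mul, int_sub_right]
  have h2 : (∫ t in p..q, M * (q - t)) = M * ((q - p)^2/2) := by
    rw [intervalIntegral.integral_const_mul, int_sub_right]
  constructor
  · have := intervalIntegral.integral_mono_on hpq
      ((continuous_const.mul hc).intervalIntegrable p q) (hg.intervalIntegrable (μ := volume) p q) hm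
    simp only [Pi.mul_apply] at this; rw [h1] at this; linarith
  · have := intervalIntegral.integral_mono_on hpq (hg.intervalIntegrable (μ := volume) p q)
      ((continuous_const.mul hc).intervalIntegrable p q) hM
    simp only [Pi.mul_apply] at this; rw [h2] at this; linarith

set_option maxHeartbeats 2000000 in
/-- Quadratic two-sided bound for the potential W near the nondegenerate zeros. -/
theorem stmt2 (f a : ℝ → ℝ) (αm α αp c : ℝ)
    (hα1 : αm < α) (hα2 : α < αp) (hc : 0 < c)
    (hf : ContDiff ℝ 2 f) (ha : ContDiff ℝ 1 a)
    (hfm : f αm = 0) (hfa : f α = 0) (hfp : f αp = 0)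
    (hfneg : ∀ s ∈ Set.Ioo αm α, f s < 0)
    (hfpos : ∀ s ∈ Set.Ioo α αp, 0 < f s)
    (hfm' : deriv f αm < 0) (hfp' : deriv f αp < 0)
    (hac : ∀ s ∈ Set.Icc αm αp, c ≤ a s)
    (W : ℝ → ℝ) (hW : ∀ u, W u = -2 * ∫ s in αm..u, a s * f s)
    (hWp : W αp = 0) :
    ∃ C_W > 0, ∀ s ∈ Set.Icc αm αp,
      C_W⁻¹ * (s - αm) ^ 2 * (αp - s) ^ 2 ≤ W s ∧
      W s ≤ C_W * (s - αm) ^ 2 * (αp - s) ^ 2 := by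
  have hαmp : αm < αp := hα1.trans hα2
  set L : ℝ := αp - αm with hL
  have hLpos : 0 < L := by simp [hL]; linarith
  clear_value L
  have hf' : Continuous (deriv f) := hf.continuous_deriv (by norm_num)
  have hdiff : ∀ x, DifferentiableAt ℝ f x :=
    fun x => (hf.differentiable (by norm_num)).differentiableAt
  have hfc : Continuous f := hf.continuous
  have hac' : Continuous a := ha.continuous
  have hafc : Continuous (fun t => a t * f t) := hac'.mul hfc
  set Km : ℝ := -(deriv f αm) with hKm
  set Kp : ℝ := -(deriv f αp) with hKp
  have hKmpos : 0 < Km := by simp [hKm]; linarith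
  have hKppos : 0 < Kp := by simp [hKp]; linarith
  clear_value Km Kp
  -- the function g with W u = ∫ g from αm to u
  set g : ℝ → ℝ := fun t => -2 * (a t * f t) with hg
  have hgc : Continuous g := by rw [hg]; exact continuous_const.mul hafc
  have hWg : ∀ u, W u = ∫ t in αm..u, g t := by
    intro u
    rw [hW u, hg, intervalIntegral.integral_const_mul]
  -- total integral of a*f is zero
  have htotal : (∫ t in αm..αp, a t * f t) = 0 := by
    have := hW αp
    rw [hWp] at this
    linarith
  -- W u = 2 * ∫ from u to αp
  set g2 : ℝ → ℝ := fun t => 2 * (a t * f t) with hg2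
  have hg2c : Continuous g2 := by rw [hg2]; exact continuous_const.mul hafc
  have hWg2 : ∀ u, W u = ∫ t in u..αp, g2 t := by
    intro u
    rw [hg2, intervalIntegral.integral_const_mul]
    have hadd := intervalIntegral.integral_add_adjacent_intervals
      (hafc.intervalIntegrable (μ := volume) αm u) (hafc.intervalIntegrable (μ := volume) u αp)
    rw [htotal] at hadd
    rw [hW u]
    linarith
  clear_value g g2
  -- continuity of W
  have hWc : Continuous W := by
    have h1 : Continuous fun u => ∫ t in αm..u, g t :=
      intervalIntegral.continuous_primitive (fun p q => hgc.intervalIntegrable p q) αm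
    have : W = fun u => ∫ t in αm..u, g t := funext hWg
    rw [this]; exact h1
  -- positivity of W on the open interval
  have hWpos : ∀ u ∈ Ioo αm αp, 0 < W u := by
    intro u hu
    rcases le_or_gt u α with huα | huα
    · rw [hWg u]
      apply intervalIntegral.intervalIntegral_pos_of_pos_on
        (hgc.intervalIntegrable (μ := volume) αm u)
      · intro x hx
        have hx' : x ∈ Ioo αm α := ⟨hx.1, lt_of_lt_of_le hx.2 huα⟩
        have h1 := hfneg x hx'
        have h2 := hac x ⟨le_of_lt hx'.1, le_of_lt (hx'.2.trans hα2)⟩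
        simp only [hg]
        nlinarith
      · exact hu.1
    · rw [hWg2 u]
      apply intervalIntegral.intervalIntegral_pos_of_pos_on
        (hg2c.intervalIntegrable (μ := volume) u αp)
      · intro x hx
        have hx' : x ∈ Ioo α αp := ⟨huα.trans hx.1, hx.2⟩
        have h1 := hfpos x hx'
        have h2 := hac x ⟨le_of_lt (hα1.trans hx'.1), le_of_lt hx'.2⟩
        simp only [hg2]
        nlinarith
      · exact hu.2
  -- upper bound A for a on the interval
  obtain ⟨x₀, hx₀, hx₀max⟩ := isCompact_Icc.exists_isMaxOn
    (nonempty_Icc.mpr hαmp.le) (hac'.continuousOn (s := Icc αm αp))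
  set A : ℝ := a x₀ with hA
  clear_value A
  have hcA : c ≤ A := by rw [hA]; exact hac x₀ hx₀
  have hApos : 0 < A := lt_of_lt_of_le hc hcA
  have haA : ∀ t ∈ Icc αm αp, a t ≤ A := by
    intro t ht; rw [hA]; exact hx₀max ht
  -- δm : radius of control near αm
  obtain ⟨δ₁, hδ₁pos, hδ₁⟩ := Metric.continuousAt_iff.mp (hf'.continuousAt (x := αm)) (Km/2)
    (by positivity)
  set δm : ℝ := min (δ₁/2) (L/2) with hδm
  have hδmpos : 0 < δm := lt_min (by linarith) (by linarith)
  have hδmL : δm ≤ L/2 := min_le_right _ _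
  have hδm1 : δm ≤ δ₁/2 := min_le_left _ _
  clear_value δm
  have hfd_m : ∀ t ∈ Icc αm (αm + δm), -(3*Km/2) ≤ deriv f t ∧ deriv f t ≤ -(Km/2) := by
    intro t ht
    have hdist : dist t αm < δ₁ := by
      rw [Real.dist_eq, abs_of_nonneg (by linarith [ht.1])]
      have := ht.2
      have : t - αm ≤ δm := by linarith
      linarith [hδm1]
    have := hδ₁ hdist
    rw [Real.dist_eq] at this
    have habs := abs_lt.mp this
    constructor <;> [linarith [habs.1]; linarith [habs.2]]
  have hfb_m : ∀ t ∈ Icc αm (αm + δm),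
      -(3*Km/2) * (t - αm) ≤ f t ∧ f t ≤ -(Km/2) * (t - αm) :=
    fun_bound_left f hf' hdiff αm (αm + δm) (-(3*Km/2)) (-(Km/2)) hfm
      (fun t ht => (hfd_m t ht).1) (fun t ht => (hfd_m t ht).2)
  -- pointwise bound on g near αm
  have hgb_m : ∀ t ∈ Icc αm (αm + δm),
      (c*Km) * (t - αm) ≤ g t ∧ g t ≤ (3*A*Km) * (t - αm) := by
    intro t ht
    have htIcc : t ∈ Icc αm αp := ⟨ht.1, by
      have := ht.2; have := hδmL; linarith⟩
    have h1 := hac t htIcc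
    have h2 := haA t htIcc
    have h3 := (hfb_m t ht).1
    have h4 := (hfb_m t ht).2
    have hu : 0 ≤ t - αm := by linarith [ht.1]
    have hnf : 0 ≤ -f t := by nlinarith [mul_nonneg hKmpos.le hu]
    simp only [hg]
    constructor
    · nlinarith [mul_le_mul h1 (show Km/2*(t - αm) ≤ -f t by linarith)
        (mul_nonneg (by linarith : (0:ℝ) ≤ Km/2) hu) (le_trans hc.le h1)]
    · nlinarith [mul_le_mul h2 (show -f t ≤ 3*Km/2*(t - αm) by linarith)
        hnf hApos.le]
  -- W bounds near αm
  have hWb_m : ∀ s ∈ Icc αm (αm + δm),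
      (c*Km) * (s - αm)^2/2 ≤ W s ∧ W s ≤ (3*A*Km) * (s - αm)^2/2 := by
    intro s hs
    have hsub : Icc αm s ⊆ Icc αm (αm + δm) := Icc_subset_Icc le_rfl hs.2
    have := int_bound_left g hgc αm s (c*Km) (3*A*Km) hs.1
      (fun t ht => (hgb_m t (hsub ht)).1) (fun t ht => (hgb_m t (hsub ht)).2)
    rw [← hWg s] at this
    exact this
  -- δp : radius of control near αp
  obtain ⟨δ₂, hδ₂pos, hδ₂⟩ := Metric.continuousAt_iff.mp (hf'.continuousAt (x := αp)) (Kp/2)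
    (by positivity)
  set δp : ℝ := min (δ₂/2) (L/2) with hδp
  have hδppos : 0 < δp := lt_min (by linarith) (by linarith)
  have hδpL : δp ≤ L/2 := min_le_right _ _
  have hδp1 : δp ≤ δ₂/2 := min_le_left _ _
  clear_value δp
  have hfd_p : ∀ t ∈ Icc (αp - δp) αp, -(3*Kp/2) ≤ deriv f t ∧ deriv f t ≤ -(Kp/2) := by
    intro t ht
    have hdist : dist t αp < δ₂ := by
      rw [Real.dist_eq, abs_of_nonpos (by linarith [ht.2])]
      have := ht.1
      linarith [hδp1]
    have := hδ₂ hdist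
    rw [Real.dist_eq] at this
    have habs := abs_lt.mp this
    constructor <;> [linarith [habs.1]; linarith [habs.2]]
  have hfb_p : ∀ t ∈ Icc (αp - δp) αp,
      -(-(Kp/2)) * (αp - t) ≤ f t ∧ f t ≤ -(-(3*Kp/2)) * (αp - t) :=
    fun_bound_right f hf' hdiff (αp - δp) αp (-(3*Kp/2)) (-(Kp/2)) hfp
      (fun t ht => (hfd_p t ht).1) (fun t ht => (hfd_p t ht).2)
  -- pointwise bound on g2 near αp
  have hgb_p : ∀ t ∈ Icc (αp - δp) αp,
      (c*Kp) * (αp - t) ≤ g2 t ∧ g2 t ≤ (3*A*Kp) * (αp - t) := by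
    intro t ht
    have htIcc : t ∈ Icc αm αp := ⟨by
      have := ht.1; have := hδpL; linarith, ht.2⟩
    have h1 := hac t htIcc
    have h2 := haA t htIcc
    have h3 := (hfb_p t ht).1
    have h4 := (hfb_p t ht).2
    have hu : 0 ≤ αp - t := by linarith [ht.2]
    have hnf : 0 ≤ f t := by nlinarith [mul_nonneg hKppos.le hu]
    simp only [hg2]
    constructor
    · nlinarith [mul_le_mul h1 (show Kp/2*(αp - t) ≤ f t by linarith)
        (mul_nonneg (by linarith : (0:ℝ) ≤ Kp/2) hu) (le_trans hc.le h1)]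
    · nlinarith [mul_le_mul h2 (show f t ≤ 3*Kp/2*(αp - t) by linarith)
        hnf hApos.le]
  -- W bounds near αp
  have hWb_p : ∀ s ∈ Icc (αp - δp) αp,
      (c*Kp) * (αp - s)^2/2 ≤ W s ∧ W s ≤ (3*A*Kp) * (αp - s)^2/2 := by
    intro s hs
    have hsub : Icc s αp ⊆ Icc (αp - δp) αp := Icc_subset_Icc hs.1 le_rfl
    have := int_bound_right g2 hg2c s αp (c*Kp) (3*A*Kp) hs.2
      (fun t ht => (hgb_p t (hsub ht)).1) (fun t ht => (hgb_p t (hsub ht)).2)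
    rw [← hWg2 s] at this
    exact this
  -- middle region
  have hβ : αm + δm ≤ αp - δp := by
    have := hδmL; have := hδpL; linarith
  obtain ⟨y₁, hy₁, hmin⟩ := isCompact_Icc.exists_isMinOn
    (nonempty_Icc.mpr hβ) (hWc.continuousOn (s := Icc (αm + δm) (αp - δp)))
  obtain ⟨y₂, hy₂, hmax⟩ := isCompact_Icc.exists_isMaxOn
    (nonempty_Icc.mpr hβ) (hWc.continuousOn (s := Icc (αm + δm) (αp - δp)))
  have hy₁Ioo : y₁ ∈ Ioo αm αp := ⟨by linarith [hy₁.1], by linarith [hy₁.2]⟩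
  have hmpos : 0 < W y₁ := hWpos y₁ hy₁Ioo
  have hMpos : 0 < W y₂ := lt_of_lt_of_le hmpos (hmin hy₂)
  -- six per-region claims
  have hL2pos : (0:ℝ) < L^2 := by positivity
  have left_low : ∀ s ∈ Icc αm (αm + δm),
      (c*Km/(2*L^2)) * ((s - αm)^2 * (αp - s)^2) ≤ W s := by
    intro s hs
    have hWlo := (hWb_m s hs).1
    have hs2 : αp - s ≤ L := by linarith [hs.1]
    have hs3 : 0 ≤ αp - s := by
      have := hs.2; have := hδmL; linarith
    have key : (s - αm)^2 * (αp - s)^2 ≤ (s - αm)^2 * L^2 :=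
      mul_le_mul_of_nonneg_left (by nlinarith) (by positivity)
    have hqpos : (0:ℝ) ≤ c*Km/(2*L^2) := by positivity
    have h3 := mul_le_mul_of_nonneg_left key hqpos
    have h2 : c*Km/(2*L^2) * ((s - αm)^2 * L^2) = c*Km * (s - αm)^2/2 := by
      field_simp
    linarith [h2 ▸ h3]
  have left_up : ∀ s ∈ Icc αm (αm + δm),
      W s ≤ (6*A*Km/L^2) * ((s - αm)^2 * (αp - s)^2) := by
    intro s hs
    have hWhi := (hWb_m s hs).2
    have hs2 : L/2 ≤ αp - s := by
      have := hs.2; have := hδmL; linarith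
    have key : (s - αm)^2 * (L/2)^2 ≤ (s - αm)^2 * (αp - s)^2 :=
      mul_le_mul_of_nonneg_left (by nlinarith) (by positivity)
    have hqpos : (0:ℝ) ≤ 6*A*Km/L^2 := by positivity
    have h3 := mul_le_mul_of_nonneg_left key hqpos
    have h2 : 6*A*Km/L^2 * ((s - αm)^2 * (L/2)^2) = 3*A*Km * (s - αm)^2/2 := by
      field_simp; ring
    linarith [h2 ▸ h3]
  have right_low : ∀ s ∈ Icc (αp - δp) αp,
      (c*Kp/(2*L^2)) * ((s - αm)^2 * (αp - s)^2) ≤ W s := by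
    intro s hs
    have hWlo := (hWb_p s hs).1
    have hs2 : s - αm ≤ L := by linarith [hs.2]
    have hs3 : 0 ≤ s - αm := by
      have := hs.1; have := hδpL; linarith
    have key : (s - αm)^2 * (αp - s)^2 ≤ L^2 * (αp - s)^2 :=
      mul_le_mul_of_nonneg_right (by nlinarith) (by positivity)
    have hqpos : (0:ℝ) ≤ c*Kp/(2*L^2) := by positivity
    have h3 := mul_le_mul_of_nonneg_left key hqpos
    have h2 : c*Kp/(2*L^2) * (L^2 * (αp - s)^2) = c*Kp * (αp - s)^2/2 := by
      field_simp
    linarith [h2 ▸ h3]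
  have right_up : ∀ s ∈ Icc (αp - δp) αp,
      W s ≤ (6*A*Kp/L^2) * ((s - αm)^2 * (αp - s)^2) := by
    intro s hs
    have hWhi := (hWb_p s hs).2
    have hs2 : L/2 ≤ s - αm := by
      have := hs.1; have := hδpL; linarith
    have key : (L/2)^2 * (αp - s)^2 ≤ (s - αm)^2 * (αp - s)^2 :=
      mul_le_mul_of_nonneg_right (by nlinarith) (by positivity)
    have hqpos : (0:ℝ) ≤ 6*A*Kp/L^2 := by positivity
    have h3 := mul_le_mul_of_nonneg_left key hqpos
    have h2 : 6*A*Kp/L^2 * ((L/2)^2 * (αp - s)^2) = 3*A*Kp * (αp - s)^2/2 := by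
      field_simp; ring
    linarith [h2 ▸ h3]
  have mid_low : ∀ s ∈ Icc (αm + δm) (αp - δp),
      (W y₁/L^4) * ((s - αm)^2 * (αp - s)^2) ≤ W s := by
    intro s hs
    have h1 : W y₁ ≤ W s := hmin hs
    have hs1 : 0 ≤ s - αm := by linarith [hs.1]
    have hs2 : s - αm ≤ L := by linarith [hs.2]
    have hs3 : 0 ≤ αp - s := by linarith [hs.2]
    have hs4 : αp - s ≤ L := by linarith [hs.1]
    have key : (s - αm)^2 * (αp - s)^2 ≤ L^4 := by
      nlinarith [mul_le_mul (show (s - αm)^2 ≤ L^2 by nlinarith)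
        (show (αp - s)^2 ≤ L^2 by nlinarith) (sq_nonneg (αp - s)) (sq_nonneg L)]
    have hqpos : (0:ℝ) ≤ W y₁/L^4 := by positivity
    have h3 := mul_le_mul_of_nonneg_left key hqpos
    have h2 : W y₁/L^4 * L^4 = W y₁ := by field_simp
    linarith [h2 ▸ h3]
  have mid_up : ∀ s ∈ Icc (αm + δm) (αp - δp),
      W s ≤ (W y₂/(δm^2 * δp^2)) * ((s - αm)^2 * (αp - s)^2) := by
    intro s hs
    have h1 : W s ≤ W y₂ := hmax hs
    have hs1 : δm ≤ s - αm := by linarith [hs.1]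
    have hs3 : δp ≤ αp - s := by linarith [hs.2]
    have key : δm^2 * δp^2 ≤ (s - αm)^2 * (αp - s)^2 := by
      nlinarith [mul_le_mul (show δm^2 ≤ (s - αm)^2 by nlinarith)
        (show δp^2 ≤ (αp - s)^2 by nlinarith) (sq_nonneg δp) (sq_nonneg (s - αm))]
    have hqpos : (0:ℝ) ≤ W y₂/(δm^2 * δp^2) := by positivity
    have h3 := mul_le_mul_of_nonneg_left key hqpos
    have h2 : W y₂/(δm^2 * δp^2) * (δm^2 * δp^2) = W y₂ := by
      have : δm^2 * δp^2 ≠ 0 := by positivity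
      field_simp
    linarith [h2 ▸ h3]
  -- combine
  set q1 : ℝ := c*Km/(2*L^2) with hq1d
  set q3 : ℝ := c*Kp/(2*L^2) with hq3d
  set q5 : ℝ := W y₁/L^4 with hq5d
  set Q2 : ℝ := 6*A*Km/L^2 with hQ2d
  set Q4 : ℝ := 6*A*Kp/L^2 with hQ4d
  set Q6 : ℝ := W y₂/(δm^2 * δp^2) with hQ6d
  have hq1 : 0 < q1 := by positivity
  have hq3 : 0 < q3 := by positivity
  have hq5 : 0 < q5 := by positivity
  have hQ2 : 0 < Q2 := by positivity
  have hQ4 : 0 < Q4 := by positivity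
  have hQ6 : 0 < Q6 := by positivity
  set C_W : ℝ := max (max q1⁻¹ (max q3⁻¹ q5⁻¹)) (max Q2 (max Q4 Q6)) with hCd
  have hCpos : 0 < C_W :=
    lt_of_lt_of_le hQ2 (le_trans (le_max_left _ _) (le_max_right _ _))
  have hCinv_le : ∀ q : ℝ, 0 < q → q⁻¹ ≤ C_W → C_W⁻¹ ≤ q := by
    intro q hq h
    rw [← inv_inv q]
    exact inv_anti₀ (inv_pos.mpr hq) h
  refine ⟨C_W, hCpos, ?_⟩
  intro s hs
  have hφ : (0:ℝ) ≤ (s - αm)^2 * (αp - s)^2 := by positivity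
  rcases le_or_gt s (αm + δm) with hcase | hcase
  · have hsin : s ∈ Icc αm (αm + δm) := ⟨hs.1, hcase⟩
    constructor
    · have h := hCinv_le q1 hq1 (le_trans (le_max_left _ _) (le_max_left _ _))
      rw [mul_assoc]
      exact le_trans (mul_le_mul_of_nonneg_right h hφ) (left_low s hsin)
    · have h : Q2 ≤ C_W := le_trans (le_max_left _ _) (le_max_right _ _)
      rw [mul_assoc]
      exact le_trans (left_up s hsin) (mul_le_mul_of_nonneg_right h hφ)
  · rcases le_or_gt (αp - δp) s with hcase2 | hcase2
    · have hsin : s ∈ Icc (αp - δp) αp := ⟨hcase2, hs.2⟩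
      constructor
      · have h := hCinv_le q3 hq3
          (le_trans (le_trans (le_max_left _ _) (le_max_right _ _)) (le_max_left _ _))
        rw [mul_assoc]
        exact le_trans (mul_le_mul_of_nonneg_right h hφ) (right_low s hsin)
      · have h : Q4 ≤ C_W :=
          le_trans (le_trans (le_max_left _ _) (le_max_right _ _)) (le_max_right _ _)
        rw [mul_assoc]
        exact le_trans (right_up s hsin) (mul_le_mul_of_nonneg_right h hφ)
    · have hsin : s ∈ Icc (αm + δm) (αp - δp) := ⟨hcase.le, hcase2.le⟩
      constructor
      · have h := hCinv_le q5 hq5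
          (le_trans (le_trans (le_max_right _ _) (le_max_right _ _)) (le_max_left _ _))
        rw [mul_assoc]
        exact le_trans (mul_le_mul_of_nonneg_right h hφ) (mid_low s hsin)
      · have h : Q6 ≤ C_W :=
          le_trans (le_trans (le_max_right _ _) (le_max_right _ _)) (le_max_right _ _)
        rw [mul_assoc]
        exact le_trans (mid_up s hsin) (mul_le_mul_of_nonneg_right h hφ)
end

section
/- Let f be C¹ bistable with zeros α₋ < α < α₊ and f > 0 on (α, α₊), f'(α₊) < 0. For any η ∈ (0, α₊ − α) there exists a constant C > 0 such that for all ε ∈ (0, ε₀) with ε₀ small enough: if ξ ≥ α + Cε then Y(ν⁻¹|ln ε|; ξ) ≥ α₊ − η, where Y solves Y' = f(Y), Y(0) = ξ, and ν = f'(α) > 0. -/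
/-!
Since `f` is `C²`, near the unstable zero `f y ≥ ν (y - α) - L (y - α)²`, so `Y - α` dominates
the logistic solution of `u' = ν u - 2 L u²` started at `C ε`. That solution grows like
`C ε e^{ν t}`, so after time `ν⁻¹ |ln ε| - τ` it has reached the fixed level `ν / (4 L)`
(this is how `C` is chosen). On the compact interval between that level and `α₊ - η`, `f` is
bounded below by some `m > 0`, so `Y` crosses it within the remaining time `τ`. Throughout,
uniqueness for the locally Lipschitz field `f` keeps solutions from crossing the equilibria.
-/

open Set Real Filter Topology

theorem eq_of_hasDerivAt_of_apply_eq {E : Type*} [NormedAddCommGroup E] [NormedSpace ℝ E]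
    {f : E → E} {g : ℝ → E} {p : E} {t₀ : ℝ} (hf : LocallyLipschitz f) (hp : f p = 0)
    (hg : ∀ t, HasDerivAt g (f (g t)) t) (ht₀ : g t₀ = p) (t : ℝ) : g t = p := by
  have hgc : Continuous g := continuous_iff_continuousAt.mpr fun t => (hg t).continuousAt
  have hopen : IsOpen {t | g t = p} := by
    refine isOpen_iff_mem_nhds.mpr fun s (hs : g s = p) => ?_
    obtain ⟨K, U, hU, hK⟩ := hf p
    have hgU : ∀ᶠ t in 𝓝 s, g t ∈ U := hgc.continuousAt.preimage_mem_nhds (hs ▸ hU)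
    exact ODE_solution_unique_of_eventually (v := fun _ => f) (s := fun _ => U)
      (Eventually.of_forall fun _ => hK) (hgU.mono fun t ht => ⟨hg t, ht⟩)
      (hgU.mono fun t _ => ⟨hp ▸ hasDerivAt_const t p, mem_of_mem_nhds hU⟩) hs
  have hclopen : IsClopen {t | g t = p} := ⟨isClosed_eq hgc continuous_const, hopen⟩
  exact (hclopen.eq_univ ⟨t₀, ht₀⟩).superset (mem_univ t)

theorem lt_of_hasDerivAt_of_lt_equilibrium {f g : ℝ → ℝ} {p s : ℝ} (hf : LocallyLipschitz f)
    (hp : f p = 0) (hg : ∀ t, HasDerivAt g (f (g t)) t) (hs : g s < p) (t : ℝ) : g t < p := by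
  by_contra! ht
  obtain ⟨r, -, hr⟩ := intermediate_value_uIcc
    (fun t _ => (hg t).continuousAt.continuousWithinAt) (mem_uIcc_of_le hs.le ht)
  exact hs.ne (eq_of_hasDerivAt_of_apply_eq hf hp hg hr s)

theorem lt_of_hasDerivAt_of_equilibrium_lt {f g : ℝ → ℝ} {p s : ℝ} (hf : LocallyLipschitz f)
    (hp : f p = 0) (hg : ∀ t, HasDerivAt g (f (g t)) t) (hs : p < g s) (t : ℝ) : p < g t := by
  by_contra! ht
  obtain ⟨r, -, hr⟩ := intermediate_value_uIcc
    (fun t _ => (hg t).continuousAt.continuousWithinAt) (mem_uIcc_of_ge ht hs.le)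
  exact hs.ne' (eq_of_hasDerivAt_of_apply_eq hf hp hg hr s)

theorem exists_sq_le_sub_taylor_of_contDiff_two {f : ℝ → ℝ} (hf : ContDiff ℝ 2 f) (a b : ℝ) :
    ∃ L > 0, ∀ y ∈ Icc a b, f a + deriv f a * (y - a) - L * (y - a) ^ 2 ≤ f y := by
  obtain ⟨K, hK⟩ := (hf.deriv' : ContDiff ℝ 1 (deriv f)).contDiffOn.exists_lipschitzOnWith one_ne_zero (convex_Icc a b)
    isCompact_Icc
  refine ⟨K + 1, by positivity, fun y hy => ?_⟩
  rcases hy.1.eq_or_lt with rfl | hay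
  · simp
  obtain ⟨c, hc, hslope⟩ := exists_deriv_eq_slope f hay hf.continuous.continuousOn
    (hf.differentiable two_ne_zero).differentiableOn
  have hderiv : deriv f a - K * (y - a) ≤ deriv f c := by
    have hLip := hK.dist_le_mul c ⟨hc.1.le, hc.2.le.trans hy.2⟩ a ⟨le_rfl, hay.le.trans hy.2⟩
    rw [Real.dist_eq, Real.dist_eq, abs_of_pos (sub_pos.2 hc.1)] at hLip
    nlinarith [neg_abs_le (deriv f c - deriv f a), K.2, hc.2]
  rw [eq_div_iff (sub_pos.2 hay).ne'] at hslope
  nlinarith [K.2, sq_nonneg (y - a)]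

noncomputable def logistic (ν K c t : ℝ) : ℝ := ν / (K + (ν / c - K) * exp (-(ν * t)))

section Logistic

variable {ν K c : ℝ}

theorem logistic_zero (hν : ν ≠ 0) : logistic ν K c 0 = c := by
  simp [logistic, hν]

theorem logistic_denom_pos (hK : 0 < K) (hKc : K ≤ ν / c) (t : ℝ) :
    0 < K + (ν / c - K) * exp (-(ν * t)) := by
  have := mul_nonneg (sub_nonneg.2 hKc) (exp_pos (-(ν * t))).le
  linarith

theorem hasDerivAt_logistic (hK : 0 < K) (hKc : K ≤ ν / c) (t : ℝ) :
    HasDerivAt (logistic ν K c) (ν * logistic ν K c t - K * logistic ν K c t ^ 2) t := by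
  have hD := logistic_denom_pos hK hKc t
  have hexp : HasDerivAt (fun t => K + (ν / c - K) * exp (-(ν * t)))
      ((ν / c - K) * (exp (-(ν * t)) * -ν)) t :=
    ((((hasDerivAt_id t).const_mul ν).neg.exp).const_mul _).const_add K |>.congr_deriv (by simp)
  refine ((hasDerivAt_const t ν).div hexp hD.ne').congr_deriv ?_
  unfold logistic
  field_simp
  ring

theorem div_two_mul_le_logistic (hν : 0 < ν) (hK : 0 < K) (hc : 0 < c) (hKc : K ≤ ν / c)
    {t : ℝ} (ht : ν ≤ K * c * exp (ν * t)) : ν / (2 * K) ≤ logistic ν K c t := by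
  have hD := logistic_denom_pos hK hKc t
  refine div_le_div_of_nonneg_left hν.le hD ?_
  have : ν / c * exp (-(ν * t)) ≤ K := by
    rw [exp_neg, ← div_eq_mul_inv, div_div, div_le_iff₀ (by positivity)]
    linarith
  nlinarith [exp_pos (-(ν * t))]

end Logistic

-- The logistic rate `2 L` makes it a strict subsolution, as the comparison principle requires.
theorem logistic_le_of_hasDerivAt {z z' : ℝ → ℝ} {ν L c t : ℝ} (hL : 0 < L)
    (hLc : 2 * L ≤ ν / c) (hz : ∀ t, HasDerivAt z (z' t) t) (hpos : ∀ t, 0 < z t)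
    (hz' : ∀ t, ν * z t - L * z t ^ 2 ≤ z' t) (h0 : c ≤ z 0) (ht : 0 ≤ t) :
    logistic ν (2 * L) c t ≤ z t := by
  have hν : ν ≠ 0 := by
    rintro rfl
    linarith [zero_div c]
  have hu := hasDerivAt_logistic (by positivity) hLc
  refine image_le_of_deriv_right_lt_deriv_boundary'
    (fun s _ => (hu s).continuousAt.continuousWithinAt) (fun s _ => (hu s).hasDerivWithinAt)
    (logistic_zero hν ▸ h0) (fun s _ => (hz s).continuousAt.continuousWithinAt)
    (fun s _ => (hz s).hasDerivWithinAt) (fun s _ hs => ?_) ⟨ht, le_rfl⟩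
  rw [hs]
  nlinarith [hz' s, pow_pos (hpos s) 2]

theorem le_apply_add_div_of_le {f g : ℝ → ℝ} {a b m t₀ : ℝ} (hab : a ≤ b) (hm : 0 < m)
    (hg : ∀ t, HasDerivAt g (f (g t)) t) (hmono : Monotone g)
    (hfm : ∀ y ∈ Icc a b, m ≤ f y) (h₀ : a ≤ g t₀) : b ≤ g (t₀ + (b - a) / m) := by
  set t₁ := t₀ + (b - a) / m
  have ht₀₁ : t₀ ≤ t₁ := le_add_of_nonneg_right (div_nonneg (sub_nonneg.2 hab) hm.le)
  by_contra! hlt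
  have hderiv : ∀ s ∈ interior (Icc t₀ t₁), m ≤ deriv g s := fun s hs => by
    rw [interior_Icc] at hs
    rw [(hg s).deriv]
    exact hfm _ ⟨h₀.trans (hmono hs.1.le), (hmono hs.2.le).trans hlt.le⟩
  have hslope := (convex_Icc t₀ t₁).mul_sub_le_image_sub_of_le_deriv
    (fun s _ => (hg s).continuousAt.continuousWithinAt)
    (fun s _ => (hg s).differentiableAt.differentiableWithinAt)
    hderiv t₀ (left_mem_Icc.2 ht₀₁) t₁ (right_mem_Icc.2 ht₀₁) ht₀₁
  have : m * (t₁ - t₀) = b - a := by rw [add_sub_cancel_left, mul_div_cancel₀ _ hm.ne']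
  linarith

theorem div_four_mul_le_apply_log_time_sub {z z' : ℝ → ℝ} {ν L τ ε : ℝ} (hν : 0 < ν)
    (hL : 0 < L) (hτ : 0 ≤ τ) (hε : 0 < ε) (hετ : ε < exp (-(ν * τ)))
    (hz : ∀ t, HasDerivAt z (z' t) t) (hpos : ∀ t, 0 < z t)
    (hz' : ∀ t, ν * z t - L * z t ^ 2 ≤ z' t) (h0 : ν * exp (ν * τ) / (2 * L) * ε ≤ z 0) :
    ν / (2 * (2 * L)) ≤ z (ν⁻¹ * |log ε| - τ) := by
  set c := ν * exp (ν * τ) / (2 * L) * ε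
  set T := ν⁻¹ * |log ε| - τ
  have hlog : log ε < -(ν * τ) := by simpa using log_lt_log hε hετ
  have hνT : ν * T = -log ε - ν * τ := by
    rw [mul_sub, abs_of_neg (hlog.trans_le (neg_nonpos.2 (by positivity))), ← mul_assoc,
      mul_inv_cancel₀ hν.ne', one_mul]
  have h2Lc : 2 * L * c = ν * (exp (ν * τ) * ε) := by
    simp only [c]
    field_simp
  have hLc : 2 * L ≤ ν / c := by
    have : exp (ν * τ) * ε < 1 := by
      have := mul_lt_mul_of_pos_left hετ (exp_pos (ν * τ))
      rwa [← exp_add, add_neg_cancel, exp_zero] at this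
    rw [le_div_iff₀ (by positivity), h2Lc]
    exact mul_le_of_le_one_right hν.le this.le
  -- `c e^{ν T} = ν / (2 L)`: at time `T` the logistic solution is at least half its capacity.
  have hcT : ν ≤ 2 * L * c * exp (ν * T) := by
    rw [h2Lc, hνT, sub_eq_add_neg, exp_add, exp_neg, exp_neg, exp_log hε]
    exact le_of_eq (by field_simp)
  calc ν / (2 * (2 * L)) ≤ logistic ν (2 * L) c T :=
        div_two_mul_le_logistic hν (by positivity) (by positivity) hLc hcT
    _ ≤ z T := logistic_le_of_hasDerivAt hL hLc hz hpos hz' h0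
        (nonneg_of_mul_nonneg_right (by linarith) hν)

theorem mem_Ioo_of_hasDerivAt {f g : ℝ → ℝ} {p q s : ℝ} (hf : LocallyLipschitz f)
    (hp : f p = 0) (hq : f q = 0) (hg : ∀ t, HasDerivAt g (f (g t)) t) (hs : g s ∈ Ioo p q)
    (t : ℝ) : g t ∈ Ioo p q :=
  ⟨lt_of_hasDerivAt_of_equilibrium_lt hf hp hg hs.1 t,
    lt_of_hasDerivAt_of_lt_equilibrium hf hq hg hs.2 t⟩

theorem stmt8_general (f : ℝ → ℝ) (hf : ContDiff ℝ 2 f)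
    (α αp : ℝ) (hfa : f α = 0) (hfp : f αp = 0)
    (ν : ℝ) (hν : ν = deriv f α) (hνpos : 0 < ν)
    (hpos : ∀ s ∈ Set.Ioo α αp, 0 < f s)
    (Y : ℝ → ℝ → ℝ)
    (hODE : ∀ ξ τ, HasDerivAt (fun t => Y t ξ) (f (Y τ ξ)) τ)
    (hinit : ∀ ξ, Y 0 ξ = ξ) :
    ∀ η ∈ Set.Ioo 0 (αp - α), ∃ C > 0, ∃ ε₀ > 0, ∀ ε ∈ Set.Ioo 0 ε₀, ∀ ξ,
      α + C * ε ≤ ξ → αp - η ≤ Y (ν⁻¹ * |Real.log ε|) ξ := by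
  rintro η ⟨hη, hηα⟩
  have hLip : LocallyLipschitz f := (hf.of_le (by norm_num)).locallyLipschitz
  obtain ⟨L, hL, hquad⟩ := exists_sq_le_sub_taylor_of_contDiff_two hf α αp
  rw [hfa, ← hν] at hquad
  set a := min (α + ν / (2 * (2 * L))) (αp - η)
  have ha : α < a := lt_min (lt_add_of_pos_right _ (by positivity)) (by linarith)
  obtain ⟨y₀, hy₀, hmin⟩ := isCompact_Icc.exists_isMinOn (nonempty_Icc.2 (min_le_right _ _))
    hf.continuous.continuousOn
  have hm : 0 < f y₀ := hpos y₀ ⟨ha.trans_le hy₀.1, hy₀.2.trans_lt (by linarith)⟩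
  set τ := (αp - η - a) / f y₀
  refine ⟨ν * exp (ν * τ) / (2 * L), by positivity, exp (-(ν * τ)), exp_pos _, ?_⟩
  rintro ε ⟨hε, hετ⟩ ξ hξ
  have hg : ∀ t, HasDerivAt (fun t => Y t ξ) (f (Y t ξ)) t := hODE ξ
  rcases lt_or_ge ξ αp with hξαp | hαpξ
  · have hmem : ∀ t, Y t ξ ∈ Ioo α αp := mem_Ioo_of_hasDerivAt hLip hfa hfp hg (s := 0)
      ⟨by rw [hinit]; linarith [show 0 < ν * exp (ν * τ) / (2 * L) * ε by positivity],
        by rwa [hinit]⟩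
    have hmono : Monotone (fun t => Y t ξ) := monotone_of_deriv_nonneg
      (fun t => (hg t).differentiableAt) fun t => (hg t).deriv ▸ (hpos _ (hmem t)).le
    have hescape : a ≤ Y (ν⁻¹ * |log ε| - τ) ξ := by
      have := div_four_mul_le_apply_log_time_sub hνpos hL
        (div_nonneg (sub_nonneg.2 (min_le_right _ _)) hm.le) hε hετ
        (fun t => (hg t).sub_const α) (fun t => sub_pos.2 (hmem t).1)
        (fun t => by linarith [hquad (Y t ξ) ⟨(hmem t).1.le, (hmem t).2.le⟩])
        (by rw [hinit]; linarith)
      linarith [min_le_left (α + ν / (2 * (2 * L))) (αp - η)]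
    have := le_apply_add_div_of_le (min_le_right _ _) hm hg hmono (fun y hy => hmin hy) hescape
    rwa [sub_add_cancel] at this
  · by_contra! h
    exact (lt_of_hasDerivAt_of_lt_equilibrium hLip hfp hg (h.trans_le (by linarith)) 0).not_ge
      (by rwa [hinit])

/-- Rapid convergence to the stable state α₊ on the time scale ν⁻¹|ln ε|,
starting Cε above the unstable zero α. -/
theorem stmt8 (f : ℝ → ℝ) (hf : ContDiff ℝ 2 f)
    (αm α αp : ℝ) (hα1 : αm < α) (hα2 : α < αp)
    (hfm : f αm = 0) (hfa : f α = 0) (hfp : f αp = 0)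
    (hfm' : deriv f αm < 0) (hfp' : deriv f αp < 0)
    (ν : ℝ) (hν : ν = deriv f α) (hνpos : 0 < ν)
    (hpos : ∀ s ∈ Set.Ioo α αp, 0 < f s)
    (Y : ℝ → ℝ → ℝ)
    (hODE : ∀ ξ τ, HasDerivAt (fun t => Y t ξ) (f (Y τ ξ)) τ)
    (hinit : ∀ ξ, Y 0 ξ = ξ) :
    ∀ η ∈ Set.Ioo 0 (αp - α), ∃ C > 0, ∃ ε₀ > 0, ∀ ε ∈ Set.Ioo 0 ε₀, ∀ ξ,
      α + C * ε ≤ ξ → αp - η ≤ Y (ν⁻¹ * |Real.log ε|) ξ :=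
  stmt8_general f hf α αp hfa hfp ν hν hνpos hpos Y hODE hinit
end

section
/- Let a: ℝ → ℝ be C¹ with a ≥ c > 0 and let f be continuous. Suppose U₀: ℝ → ℝ is C² and solves (a(U₀) U₀')' + f(U₀) = 0 on ℝ with U₀' > 0, U₀(−∞) = α₋, U₀'(±∞) = 0, and define A(s) = ∫_{α₋}^s a(t)dt and W(u) = −2∫_{α₋}^u a(s)f(s)ds. Then (A(U₀(z)))' = √(W(U₀(z))) for all z ∈ ℝ, i.e., a(U₀)U₀' = √(W(U₀)). -/
open MeasureTheory intervalIntegral Filter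

/-!
Multiplying the equation by the flux `g = a(U₀) U₀'` shows that the energy `g² - W(U₀)` has zero
derivative, since `W' = -2 a f`. It is therefore constant, and its limit at `-∞` is `0 - W(α₋) = 0`.
So `g² = W(U₀)`, and `g > 0` selects the positive square root.
-/

theorem eq_of_hasDerivAt_zero_of_tendsto_atBot {E : Type*} [NormedAddCommGroup E]
    [NormedSpace ℝ E] {φ : ℝ → E} {L : E} (hφ : ∀ x, HasDerivAt φ 0 x)
    (hlim : Tendsto φ atBot (nhds L)) (x : ℝ) : φ x = L := by
  have hconst : ∀ y, φ x = φ y := fun y =>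
    is_const_of_deriv_eq_zero (fun y => (hφ y).differentiableAt) (fun y => (hφ y).deriv) x y
  refine tendsto_nhds_unique ?_ hlim
  exact tendsto_const_nhds.congr hconst

theorem hasDerivAt_neg_two_mul_integral_mul {a f : ℝ → ℝ} (ha : Continuous a)
    (hf : Continuous f) (α u : ℝ) :
    HasDerivAt (fun u => -2 * ∫ s in α..u, a s * f s) (-2 * (a u * f u)) u :=
  ((ha.mul hf).integral_hasStrictDerivAt α u).hasDerivAt.const_mul (-2)

theorem hasDerivAt_flux_sq_sub_potential {a f U W : ℝ → ℝ} {z : ℝ}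
    (hW : HasDerivAt W (-2 * (a (U z) * f (U z))) (U z))
    (hU : HasDerivAt U (deriv U z) z)
    (hflux : HasDerivAt (fun z => a (U z) * deriv U z) (-f (U z)) z) :
    HasDerivAt (fun z => (a (U z) * deriv U z) ^ 2 - W (U z)) 0 z := by
  refine ((hflux.pow 2).sub (hW.comp z hU)).congr_deriv ?_
  push_cast
  ring

theorem stmt9_general (a f : ℝ → ℝ) (c αm : ℝ) (hc : 0 < c)
    (ha : ContDiff ℝ 1 a) (hac : ∀ s, c ≤ a s) (hf : Continuous f)
    (U₀ : ℝ → ℝ)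
    (hODE : ∀ z, HasDerivAt (fun z' => a (U₀ z') * deriv U₀ z') (-(f (U₀ z))) z)
    (hU₀' : ∀ z, 0 < deriv U₀ z)
    (hbot : Tendsto U₀ atBot (nhds αm))
    (hflatbot : Tendsto (fun z => a (U₀ z) * deriv U₀ z) atBot (nhds 0))
    (W : ℝ → ℝ)
    (hW : ∀ u, W u = -2 * ∫ s in αm..u, a s * f s) :
    ∀ z, a (U₀ z) * deriv U₀ z = Real.sqrt (W (U₀ z)) := by
  have hW' : ∀ u, HasDerivAt W (-2 * (a u * f u)) u := by
    rw [funext hW]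
    exact hasDerivAt_neg_two_mul_integral_mul ha.continuous hf αm
  have hU : ∀ z, HasDerivAt U₀ (deriv U₀ z) z := fun z =>
    (differentiableAt_of_deriv_ne_zero (hU₀' z).ne').hasDerivAt
  have henergy_lim : Tendsto (fun z => (a (U₀ z) * deriv U₀ z) ^ 2 - W (U₀ z)) atBot
      (nhds 0) := by
    have hWαm : W αm = 0 := by simp [hW]
    simpa [hWαm] using (hflatbot.pow 2).sub ((hW' αm).continuousAt.tendsto.comp hbot)
  intro z
  have henergy := eq_of_hasDerivAt_zero_of_tendsto_atBot
    (fun z => hasDerivAt_flux_sq_sub_potential (hW' (U₀ z)) (hU z) (hODE z)) henergy_lim z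
  have hflux_pos : 0 < a (U₀ z) * deriv U₀ z := mul_pos (hc.trans_le (hac _)) (hU₀' z)
  rw [← Real.sqrt_sq hflux_pos.le, sub_eq_zero.mp henergy]

/-- First-integral identity for the traveling profile:
a(U₀)U₀' = √(W(U₀)) where W(u) = −2∫_{α₋}^u a f. -/
theorem stmt9 (a f : ℝ → ℝ) (c αm αp : ℝ) (hc : 0 < c) (hαs : αm < αp)
    (ha : ContDiff ℝ 1 a) (hac : ∀ s, c ≤ a s) (hf : Continuous f)
    (U₀ : ℝ → ℝ) (hU₀ : ContDiff ℝ 2 U₀)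
    (hODE : ∀ z, HasDerivAt (fun z' => a (U₀ z') * deriv U₀ z') (-(f (U₀ z))) z)
    (hU₀' : ∀ z, 0 < deriv U₀ z)
    (hbot : Tendsto U₀ atBot (nhds αm)) (htop : Tendsto U₀ atTop (nhds αp))
    (hflatbot : Tendsto (fun z => a (U₀ z) * deriv U₀ z) atBot (nhds 0))
    (hflattop : Tendsto (fun z => a (U₀ z) * deriv U₀ z) atTop (nhds 0))
    (A W : ℝ → ℝ)
    (hA : ∀ s, A s = ∫ t in αm..s, a t)
    (hW : ∀ u, W u = -2 * ∫ s in αm..u, a s * f s) :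
    ∀ z, a (U₀ z) * deriv U₀ z = Real.sqrt (W (U₀ z)) :=
  stmt9_general a f c αm hc ha hac hf U₀ hODE hU₀' hbot hflatbot W hW
end
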